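/- Let x ∈ 𝔻, let τ ∈ (0,1] with S̃_Δ(x)(τ) > 0 and #Ã_τ(x) = 1, and let x_n ∈ 𝔻 be a sequence with ‖x_n − x‖ → 0. Then for all sufficiently large n one has Ã_τ(x_n) ≠ ∅ and R̃_τ(x_n) = L̃_τ(x_n) = R̃_τ(x) = L̃_τ(x). -/

import Mathlib

/-!
Uniform convergence moves every jump by at most twice the uniform distance, since the left
limits move by at most that distance too. A càdlàg function has only finitely many jumps above
any positive threshold, so when the largest jump of `x` on `[0, τ]` sits at a single time `s₀`,
all other jumps on `[0, τ]` stay below it by a fixed gap `δ > 0`. Once `‖xₙ - x‖ < δ / 4`,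
`s₀` is still the unique time of the largest jump of `xₙ` on `[0, τ]`.
-/

open Filter Topology Set unitInterval

noncomputable section

open scoped Classical

instance : Fact ((0:ℝ) ≤ 1) := ⟨zero_le_one⟩

/-- The space `𝔻` of càdlàg functions on `[0,1]`: right-continuous everywhere with
finite left limits everywhere (conditions at the endpoints hold vacuously). -/
def Cadlag (x : I → ℝ) : Prop :=
  (∀ τ : I, Tendsto x (𝓝[>] τ) (𝓝 (x τ))) ∧ (∀ τ : I, ∃ l : ℝ, Tendsto x (𝓝[<] τ) (𝓝 l))

/-- The sup-norm `‖x‖ = sup_{0 ≤ τ ≤ 1} |x(τ)|`. -/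
def dNorm (x : I → ℝ) : ℝ := ⨆ τ : I, |x τ|

/-- The jump `Δx(τ) = x(τ) - x(τ-)` of `x` at `τ`, with `Δx(0) := 0`. -/
def jump (x : I → ℝ) (τ : I) : ℝ := if τ = 0 then 0 else x τ - Function.leftLim x τ

/-- The running supremum `S(x)(τ) = sup_{0 ≤ s ≤ τ} x(s)`. -/
def runSup (x : I → ℝ) (τ : I) : ℝ := sSup (x '' {s : I | s ≤ τ})

/-- The running absolute supremum `S̃(x)(τ) = sup_{0 ≤ s ≤ τ} |x(s)|`. -/
def runAbsSup (x : I → ℝ) (τ : I) : ℝ := sSup ((fun s => |x s|) '' {s : I | s ≤ τ})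

/-- The largest positive jump `S_{+Δ}(x)(τ) = sup_{0 ≤ s ≤ τ} Δx(s)`. -/
def posJumpSup (x : I → ℝ) (τ : I) : ℝ := sSup (jump x '' {s : I | s ≤ τ})

/-- The largest modulus jump `S̃_Δ(x)(τ) = sup_{0 ≤ s ≤ τ} |Δx(s)|`. -/
def modJumpSup (x : I → ℝ) (τ : I) : ℝ := sSup ((fun s => |jump x s|) '' {s : I | s ≤ τ})

/-- The first extremal positive trimming ("trim as you go") operator
`T^{(1,+)}_{rim}(x) = x - S_{+Δ}(x)`. -/
def trimPos (x : I → ℝ) : I → ℝ := fun τ => x τ - posJumpSup x τ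

/-- `Λ`: continuous strictly increasing bijections of `[0,1]` fixing the endpoints. -/
def IsTimeChange (l : I → I) : Prop := Continuous l ∧ StrictMono l ∧ l 0 = 0 ∧ l 1 = 1

/-- Convergence in the (strong) Skorokhod `J₁`-topology. -/
def J1Tendsto (xn : ℕ → I → ℝ) (x : I → ℝ) : Prop :=
  ∃ l : ℕ → I → I, (∀ n, IsTimeChange (l n)) ∧
    Tendsto (fun n => dNorm (fun τ => (l n τ : ℝ) - (τ : ℝ))) atTop (𝓝 0) ∧
    Tendsto (fun n => dNorm (fun τ => xn n (l n τ) - x τ)) atTop (𝓝 0)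

/-- `Ã_τ(x)`: the times `s ∈ (0,τ]` of the largest modulus jump of `x` on `[0,τ]`
(empty when `S̃_Δ(x)(τ) = 0`). -/
def tildeA (x : I → ℝ) (τ : I) : Set I :=
  {s : I | 0 < s ∧ s ≤ τ ∧ 0 < |jump x s| ∧ |jump x s| = modJumpSup x τ}

/-- `A⁺_τ(x)`: the times `s ∈ (0,τ]` of the largest positive jump of `x` on `[0,τ]`
(empty when `S_{+Δ}(x)(τ) = 0`). -/
def posA (x : I → ℝ) (τ : I) : Set I :=
  {s : I | 0 < s ∧ s ≤ τ ∧ 0 < jump x s ∧ jump x s = posJumpSup x τ}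

/-- The signed largest-modulus ("trim as you go") trimmer `𝔗_rim`:
`𝔗_rim(x)(τ) = x(τ) - Δx(L̃_τ(x))` if `Ã_τ(x) ≠ ∅`, `x(τ)` otherwise, where
`L̃_τ(x) = max Ã_τ(x)`. -/
def sgnModTrim (x : I → ℝ) : I → ℝ := fun τ =>
  if (tildeA x τ).Nonempty then x τ - jump x (sSup (tildeA x τ)) else x τ

/-- The record time ("lookback") trimmer:
`R_trim(x) = x - Δx(R₁(x))·1_{[R₁(x),1]}` if `A⁺₁(x) ≠ ∅`, `x` otherwise, where
`R₁(x) = min A⁺₁(x)`. -/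
def recordTrim (x : I → ℝ) : I → ℝ := fun τ =>
  if (posA x 1).Nonempty ∧ sInf (posA x 1) ≤ τ then x τ - jump x (sInf (posA x 1)) else x τ

/-- The modulus record time trimmer:
`R̃_trim(x) = x - Δx(R̃₁(x))·1_{[R̃₁(x),1]}` if `Ã₁(x) ≠ ∅`, `x` otherwise, where
`R̃₁(x) = min Ã₁(x)`. -/
def modRecordTrim (x : I → ℝ) : I → ℝ := fun τ =>
  if (tildeA x 1).Nonempty ∧ sInf (tildeA x 1) ≤ τ then x τ - jump x (sInf (tildeA x 1)) else x τ

lemma nhdsLT_neBot_of_ne_zero {s : I} (hs : s ≠ 0) : (𝓝[<] s).NeBot :=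
  nhdsLT_neBot_of_exists_lt ⟨0, lt_of_le_of_ne nonneg' hs.symm⟩

@[simp]
lemma jump_zero (x : I → ℝ) : jump x 0 = 0 := if_pos rfl

lemma abs_le_dNorm {x : I → ℝ} (hx : BddAbove (range fun s => |x s|)) (s : I) :
    |x s| ≤ dNorm x :=
  le_ciSup hx s

lemma abs_jump_le_modJumpSup {x : I → ℝ} {τ s : I} (hS : 0 < modJumpSup x τ) (hs : s ≤ τ) :
    |jump x s| ≤ modJumpSup x τ := by
  -- `sSup` of a set of reals that is not bounded above is `0`
  have hbdd : BddAbove ((fun s => |jump x s|) '' {s | s ≤ τ}) := by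
    by_contra hb
    rw [modJumpSup, Real.sSup_of_not_bddAbove hb] at hS
    exact lt_irrefl _ hS
  exact le_csSup hbdd ⟨s, hs, rfl⟩

lemma tildeA_eq_singleton_of_forall_abs_jump_lt {x : I → ℝ} {τ s₀ : I} (hs₀pos : 0 < s₀)
    (hs₀ : s₀ ≤ τ) (hlt : ∀ s ≤ τ, s ≠ s₀ → |jump x s| < |jump x s₀|) :
    tildeA x τ = {s₀} := by
  have hmax : modJumpSup x τ = |jump x s₀| := by
    refine IsGreatest.csSup_eq ⟨⟨s₀, hs₀, rfl⟩, ?_⟩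
    rintro _ ⟨s, hs, rfl⟩
    rcases eq_or_ne s s₀ with rfl | hne
    exacts [le_rfl, (hlt s hs hne).le]
  have hpos : 0 < |jump x s₀| := by simpa using hlt 0 nonneg' hs₀pos.ne
  ext s
  simp only [tildeA, mem_ofPred_eq, mem_singleton_iff, hmax]
  constructor
  · rintro ⟨-, hsτ, -, heq⟩
    by_contra hne
    exact (hlt s hsτ hne).ne heq
  · rintro rfl
    exact ⟨hs₀pos, hs₀, hpos, rfl⟩

namespace Cadlag

variable {x y : I → ℝ}

lemma sub (hx : Cadlag x) (hy : Cadlag y) : Cadlag (x - y) :=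
  ⟨fun τ => (hx.1 τ).sub (hy.1 τ), fun τ => by
    obtain ⟨l, hl⟩ := hx.2 τ
    obtain ⟨m, hm⟩ := hy.2 τ
    exact ⟨l - m, hl.sub hm⟩⟩

lemma eventually_abs_le (hx : Cadlag x) (a : I) : ∃ C, ∀ᶠ s in 𝓝 a, |x s| ≤ C := by
  obtain ⟨l, hl⟩ := hx.2 a
  refine ⟨|x a| + |l| + 1, ?_⟩
  have hright : ∀ᶠ s in 𝓝[>] a, |x s| < |x a| + 1 :=
    (hx.1 a).abs.eventually (gt_mem_nhds (lt_add_one _))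
  have hleft : ∀ᶠ s in 𝓝[<] a, |x s| < |l| + 1 := hl.abs.eventually (gt_mem_nhds (lt_add_one _))
  rw [← nhdsNE_sup_pure, ← nhdsLT_sup_nhdsGT, eventually_sup, eventually_sup, eventually_pure]
  refine ⟨⟨hleft.mono fun s hs => ?_, hright.mono fun s hs => ?_⟩, ?_⟩ <;>
    linarith [abs_nonneg (x a), abs_nonneg l]

lemma bddAbove_range_abs (hx : Cadlag x) : BddAbove (range fun s => |x s|) := by
  rw [← image_univ]
  refine isCompact_univ.induction_on (p := fun t => BddAbove ((fun s => |x s|) '' t))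
    (by simp) (fun s t hst ht => ht.mono (image_mono hst))
    (fun s t hs ht => by simpa only [image_union] using hs.union ht) fun a _ => ?_
  obtain ⟨C, hC⟩ := hx.eventually_abs_le a
  exact ⟨_, nhdsWithin_le_nhds hC, C, forall_mem_image.2 fun s hs => hs⟩

lemma tendsto_leftLim (hx : Cadlag x) {s : I} (hs : s ≠ 0) :
    Tendsto x (𝓝[<] s) (𝓝 (Function.leftLim x s)) := by
  obtain ⟨l, hl⟩ := hx.2 s
  have := nhdsLT_neBot_of_ne_zero hs
  rwa [leftLim_eq_of_tendsto hl]

lemma jump_sub (hx : Cadlag x) (hy : Cadlag y) (s : I) :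
    jump (x - y) s = jump x s - jump y s := by
  rcases eq_or_ne s 0 with rfl | hs
  · simp
  have := nhdsLT_neBot_of_ne_zero hs
  have hlim : Function.leftLim (x - y) s = Function.leftLim x s - Function.leftLim y s :=
    leftLim_eq_of_tendsto ((hx.tendsto_leftLim hs).sub (hy.tendsto_leftLim hs))
  simp only [jump, if_neg hs, Pi.sub_apply, hlim]
  ring

lemma abs_jump_le (hx : Cadlag x) {s : I} {m η : ℝ} (hs : |x s - m| ≤ η)
    (hleft : ∀ᶠ t in 𝓝[<] s, |x t - m| ≤ η) : |jump x s| ≤ 2 * η := by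
  rcases eq_or_ne s 0 with rfl | hs0
  · simp only [jump_zero, abs_zero]
    linarith [abs_nonneg (x 0 - m)]
  have := nhdsLT_neBot_of_ne_zero hs0
  have hlim : |Function.leftLim x s - m| ≤ η :=
    le_of_tendsto ((hx.tendsto_leftLim hs0).sub_const m).abs hleft
  calc |jump x s| = |(x s - m) - (Function.leftLim x s - m)| := by
        rw [jump, if_neg hs0, sub_sub_sub_cancel_right]
    _ ≤ |x s - m| + |Function.leftLim x s - m| := abs_sub _ _
    _ ≤ 2 * η := by linarith

lemma abs_jump_sub_jump_le (hx : Cadlag x) (hy : Cadlag y) {ε : ℝ} (h : ∀ t, |x t - y t| ≤ ε)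
    (s : I) : |jump x s - jump y s| ≤ 2 * ε := by
  rw [← hx.jump_sub hy]
  exact (hx.sub hy).abs_jump_le (m := 0) (by simpa using h s)
    (Eventually.of_forall fun t => by simpa using h t)

lemma eventually_abs_jump_le (hx : Cadlag x) (a : I) {ε : ℝ} (hε : 0 < ε) :
    ∀ᶠ s in 𝓝[≠] a, |jump x s| ≤ ε := by
  -- on each side of `a`, `x` stays close to its one-sided limit `m`, and so do its left limits
  have side : ∀ (U : Set I) (m : ℝ), IsOpen U → Tendsto x (𝓝[U] a) (𝓝 m) →
      ∀ᶠ s in 𝓝[U] a, |jump x s| ≤ ε := by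
    intro U m hU hlim
    have hnear : ∀ᶠ t in 𝓝[U] a, |x t - m| ≤ ε / 2 :=
      (hlim.eventually (Metric.closedBall_mem_nhds m (half_pos hε))).mono fun t ht => by
        rwa [Real.dist_eq] at ht
    filter_upwards [eventually_eventually_nhdsWithin.2 hnear, hnear, self_mem_nhdsWithin]
      with s hs_near hs hsU
    rw [hU.nhdsWithin_eq hsU] at hs_near
    linarith [hx.abs_jump_le hs (nhdsWithin_le_nhds hs_near)]
  obtain ⟨l, hl⟩ := hx.2 a
  rw [← nhdsLT_sup_nhdsGT, eventually_sup]
  exact ⟨side _ l isOpen_Iio hl, side _ (x a) isOpen_Ioi (hx.1 a)⟩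

lemma finite_setOf_le_abs_jump (hx : Cadlag x) {ε : ℝ} (hε : 0 < ε) :
    {s | ε ≤ |jump x s|}.Finite := by
  have h := isClosed_and_discrete_iff.2 fun a => disjoint_principal_right.2 <|
    (hx.eventually_abs_jump_le a (half_pos hε)).mono fun s hs hbig => by
      linarith [show ε ≤ |jump x s| from hbig]
  exact h.1.isCompact.finite h.2

lemma exists_gap_of_tildeA_eq_singleton (hx : Cadlag x) {τ s₀ : I}
    (hA : tildeA x τ = {s₀}) (hS : 0 < modJumpSup x τ) :
    ∃ δ > 0, ∀ s ≤ τ, s ≠ s₀ → |jump x s| ≤ modJumpSup x τ - δ := by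
  set M := modJumpSup x τ
  set F := {s | M / 2 ≤ |jump x s|} ∩ {s | s ≤ τ ∧ s ≠ s₀}
  have hF : F.Finite := (hx.finite_setOf_le_abs_jump (half_pos hS)).inter_of_left _
  have hlt : ∀ s ∈ F, |jump x s| < M := by
    rintro s ⟨hbig, hsτ, hne⟩
    refine (abs_jump_le_modJumpSup hS hsτ).lt_of_ne fun heq => hne ?_
    have hpos : 0 < |jump x s| := by simp only [mem_ofPred_eq] at hbig; linarith
    have hs0 : 0 < s := lt_of_le_of_ne nonneg' fun h => by simp [← h] at hpos
    simpa [hA] using (show s ∈ tildeA x τ from ⟨hs0, hsτ, hpos, heq⟩)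
  -- `M / 2` is thrown in so that the bound also covers the small jumps outside `F`
  set T := insert (M / 2) ((fun s => |jump x s|) '' F)
  have hT : T.Finite := (hF.image _).insert _
  have hTM : sSup T < M := (hT.csSup_lt_iff (insert_nonempty _ _)).2 <| by
    simp only [T, forall_mem_insert, forall_mem_image]
    exact ⟨half_lt_self hS, hlt⟩
  refine ⟨M - sSup T, sub_pos.2 hTM, fun s hsτ hne => ?_⟩
  rw [sub_sub_cancel]
  by_cases hbig : M / 2 ≤ |jump x s|
  · exact le_csSup hT.bddAbove (mem_insert_of_mem _ ⟨s, ⟨hbig, hsτ, hne⟩, rfl⟩)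
  · exact (not_le.1 hbig).le.trans (le_csSup hT.bddAbove (mem_insert _ _))

end Cadlag

theorem stmt16_general (x : I → ℝ) (hx : Cadlag x) (τ : I)
    (hS : 0 < modJumpSup x τ) (huniq : ∃ s : I, tildeA x τ = {s})
    (xn : ℕ → I → ℝ) (hxn : ∀ n, Cadlag (xn n))
    (hconv : Tendsto (fun n => dNorm (fun s => xn n s - x s)) atTop (𝓝 0)) :
    ∀ᶠ n in atTop, (tildeA (xn n) τ).Nonempty ∧
      sInf (tildeA (xn n) τ) = sSup (tildeA (xn n) τ) ∧
      sInf (tildeA (xn n) τ) = sInf (tildeA x τ) ∧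
      sInf (tildeA x τ) = sSup (tildeA x τ) := by
  obtain ⟨s₀, hA⟩ := huniq
  obtain ⟨hs₀pos, hs₀τ, -, hs₀max⟩ : s₀ ∈ tildeA x τ := hA ▸ mem_singleton s₀
  obtain ⟨δ, hδ, hgap⟩ := hx.exists_gap_of_tildeA_eq_singleton hA hS
  filter_upwards [hconv.eventually_lt_const (by positivity : (0 : ℝ) < δ / 4)] with n hn
  have hclose : ∀ s, |jump (xn n) s - jump x s| < δ / 2 := fun s => by
    have := (hxn n).abs_jump_sub_jump_le hx (abs_le_dNorm ((hxn n).sub hx).bddAbove_range_abs) s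
    linarith
  have hAn : tildeA (xn n) τ = {s₀} := by
    refine tildeA_eq_singleton_of_forall_abs_jump_lt hs₀pos hs₀τ fun s hsτ hne => ?_
    have h₁ := abs_sub_abs_le_abs_sub (jump (xn n) s) (jump x s)
    have h₂ := abs_sub_abs_le_abs_sub (jump x s₀) (jump (xn n) s₀)
    rw [abs_sub_comm] at h₂
    linarith [hclose s, hclose s₀, hgap s hsτ hne]
  simp [hAn, hA]

/-- if `‖x_n - x‖ → 0`, `S̃_Δ(x)(τ) > 0` and `#Ã_τ(x) = 1`, then
eventually `Ã_τ(x_n) ≠ ∅` and `R̃_τ(x_n) = L̃_τ(x_n) = R̃_τ(x) = L̃_τ(x)`. -/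
theorem stmt16 (x : I → ℝ) (hx : Cadlag x) (τ : I) (hτ : τ ≠ 0)
    (hS : 0 < modJumpSup x τ) (huniq : ∃ s : I, tildeA x τ = {s})
    (xn : ℕ → I → ℝ) (hxn : ∀ n, Cadlag (xn n))
    (hconv : Tendsto (fun n => dNorm (fun s => xn n s - x s)) atTop (𝓝 0)) :
    ∀ᶠ n in atTop, (tildeA (xn n) τ).Nonempty ∧
      sInf (tildeA (xn n) τ) = sSup (tildeA (xn n) τ) ∧
      sInf (tildeA (xn n) τ) = sInf (tildeA x τ) ∧
      sInf (tildeA x τ) = sSup (tildeA x τ) :=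
  stmt16_general x hx τ hS huniq xn hxn hconv

end
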